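/- arXiv:1707.06849 — 6 statements merged into one kernel-verified Lean document; each statement's English description precedes it below -/
import Mathlib

section
/- Let S ∈ ℝ^{R×N} and H ∈ ℝ^{M×N} with M ≤ R and rank(H) = N. Then rank(S) = N if and only if there exists a matrix S̃ ∈ ℝ^{R×M} with rank(S̃) = M and S = S̃ H. -/
/-!
Full column rank means that `mulVec` is injective, so one direction is the composition of
injective maps. Conversely, with `S` and `H` injective, define `S̃` as `S ∘ H⁻¹` on the range of
`H` and as an injection of a complement of that range into a complement of the range of `S`;
such an injection exists because `M - N ≤ R - N`, and the two pieces have disjoint ranges, so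
`S̃` is injective.
-/

open Matrix

theorem Matrix.rank_eq_card_width_iff_injective_mulVec {R : Type*} [CommRing R] [Nontrivial R]
    {m n : Type*} [Fintype n] (A : Matrix m n R) :
    A.rank = Fintype.card n ↔ Function.Injective A.mulVec := by
  rw [rank_eq_finrank_span_cols, mulVec_injective_iff, linearIndependent_iff_card_eq_finrank_span,
    Set.finrank, eq_comm]

namespace LinearMap

variable {K U V W : Type*} [Field K] [AddCommGroup U] [Module K U] [AddCommGroup V] [Module K V]
  [AddCommGroup W] [Module K W]

theorem injective_ofIsCompl {p q : Submodule K V} (hpq : IsCompl p q) {φ : p →ₗ[K] W}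
    {ψ : q →ₗ[K] W} (hφ : Function.Injective φ) (hψ : Function.Injective ψ)
    (hφψ : Disjoint (range φ) (range ψ)) : Function.Injective (ofIsCompl hpq φ ψ) := by
  have hcoprod : Function.Injective (coprod φ ψ) := by
    rw [← ker_eq_bot, ker_coprod_of_disjoint_range _ _ hφψ, ker_eq_bot.2 hφ, ker_eq_bot.2 hψ,
      Submodule.prod_bot]
  exact hcoprod.comp (Submodule.prodEquivOfIsCompl p q hpq).symm.injective

theorem exists_injective_of_finrank_le [FiniteDimensional K V] [FiniteDimensional K W]
    (h : Module.finrank K V ≤ Module.finrank K W) : ∃ f : V →ₗ[K] W, Function.Injective f :=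
  Module.Free.exists_linearMap_injective_of_linearIndependent_of_lift_rank_le
    (Module.finBasis K W).linearIndependent (by simpa [← Module.finrank_eq_rank] using h)

theorem exists_injective_comp_eq [FiniteDimensional K V] [FiniteDimensional K W]
    {h : U →ₗ[K] V} {s : U →ₗ[K] W} (hh : Function.Injective h) (hs : Function.Injective s)
    (hVW : Module.finrank K V ≤ Module.finrank K W) :
    ∃ f : V →ₗ[K] W, Function.Injective f ∧ f ∘ₗ h = s := by
  have : FiniteDimensional K U := Module.Finite.of_injective h hh
  obtain ⟨C, hC⟩ := (range h).exists_isCompl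
  obtain ⟨D, hD⟩ := (range s).exists_isCompl
  have hCD : Module.finrank K C ≤ Module.finrank K D := by
    have hV := Submodule.finrank_add_eq_of_isCompl hC
    have hW := Submodule.finrank_add_eq_of_isCompl hD
    rw [finrank_range_of_inj hh] at hV
    rw [finrank_range_of_inj hs] at hW
    omega
  obtain ⟨ι, hι⟩ := exists_injective_of_finrank_le hCD
  let e := LinearEquiv.ofInjective h hh
  refine ⟨ofIsCompl hC (s ∘ₗ e.symm.toLinearMap) (D.subtype ∘ₗ ι),
    injective_ofIsCompl hC (hs.comp e.symm.injective) (D.injective_subtype.comp hι) ?_, ?_⟩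
  · refine hD.disjoint.mono ?_ ?_
    · exact range_comp_le_range _ _
    · exact (range_comp_le_range _ _).trans (Submodule.range_subtype D).le
  · ext x
    have : h x = (e x : V) := rfl
    simp [this, ofIsCompl_apply_left]

end LinearMap

theorem stmt_2 {R M N : ℕ} (hMR : M ≤ R)
    (S : Matrix (Fin R) (Fin N) ℝ) (H : Matrix (Fin M) (Fin N) ℝ)
    (hH : H.rank = N) :
    S.rank = N ↔
      ∃ S' : Matrix (Fin R) (Fin M) ℝ, S'.rank = M ∧ S = S' * H := by
  have rank_eq_iff {m n : ℕ} (A : Matrix (Fin m) (Fin n) ℝ) :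
      A.rank = n ↔ Function.Injective A.mulVec := by
    simpa using A.rank_eq_card_width_iff_injective_mulVec
  have hHinj := (rank_eq_iff H).1 hH
  constructor
  · intro hS
    obtain ⟨f, hf, hfH⟩ := LinearMap.exists_injective_comp_eq (h := H.mulVecLin)
      (s := S.mulVecLin) hHinj ((rank_eq_iff S).1 hS) (by simpa using hMR)
    refine ⟨LinearMap.toMatrix' f, (rank_eq_iff _).2 fun v w hvw => hf ?_, ?_⟩
    · simpa only [LinearMap.toMatrix'_mulVec] using hvw
    apply Matrix.toLin'.injective
    rw [Matrix.toLin'_mul, Matrix.toLin'_toMatrix', Matrix.toLin'_apply', Matrix.toLin'_apply', hfH]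
  · rintro ⟨S', hS', rfl⟩
    refine (rank_eq_iff _).2 fun v w hvw => hHinj ((rank_eq_iff S').1 hS' ?_)
    simpa only [mulVec_mulVec] using hvw
end

section
/- Let G ∈ ℝ^{N×N}. The family of matrices exp(tG) converges as t → ∞ if and only if every nonzero eigenvalue λ of G (over ℂ) satisfies Re(λ) < 0 and, for the eigenvalue 0 (if present), its algebraic and geometric multiplicities coincide. -/
/-!
Over `ℂ`, on the generalized eigenspace of `μ` the flow `exp (t • A)` is `exp (t * μ)` times a
polynomial in `t`, so it converges there iff `Re μ < 0` (exponential decay beats polynomial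
growth) or `μ = 0` and `A` vanishes on it (the flow is the identity). Conversely an eigenvector
with `μ ≠ 0`, `Re μ ≥ 0` has the non-convergent orbit `exp (t * μ) • v`, and a vector with
`A² u = 0 ≠ A u` has the unbounded orbit `u + t • A u`. "`A` vanishes on the generalized
0-eigenspace" means `ker A² = ker A`, which is equivalent to the algebraic and geometric
multiplicities of `0` being equal. A real matrix is handled through its complexification:
the exponential commutes with it, and `ker G² = ker G` passes to real and imaginary parts.
-/

open Matrix Filter NormedSpace Module Topology

theorem tendsto_pow_mul_cexp_atTop_nhds_zero {μ : ℂ} (hμ : μ.re < 0) (j : ℕ) :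
    Tendsto (fun t : ℝ => (t : ℂ) ^ j * Complex.exp (t * μ)) atTop (𝓝 0) := by
  rw [tendsto_zero_iff_norm_tendsto_zero]
  refine (tendsto_rpow_mul_exp_neg_mul_atTop_nhds_zero j (-μ.re) (neg_pos.2 hμ)).congr' ?_
  filter_upwards [eventually_ge_atTop 0] with t ht
  simp [Complex.norm_exp, abs_of_nonneg ht, mul_comm]

theorem eq_zero_or_re_neg_of_tendsto_cexp_smul {E : Type*} [NormedAddCommGroup E]
    [NormedSpace ℂ E] {μ : ℂ} {v L : E} (hv : v ≠ 0)
    (h : Tendsto (fun t : ℝ => Complex.exp (t * μ) • v) atTop (𝓝 L)) : μ = 0 ∨ μ.re < 0 := by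
  refine or_iff_not_imp_right.2 fun hre => ?_
  have hL : L ≠ 0 := by
    have hvL : ‖v‖ ≤ ‖L‖ := by
      refine ge_of_tendsto h.norm ?_
      filter_upwards [eventually_ge_atTop 0] with t ht
      rw [norm_smul]
      refine le_mul_of_one_le_left (norm_nonneg v) ?_
      rw [Complex.norm_exp, Complex.re_ofReal_mul]
      exact Real.one_le_exp (mul_nonneg ht (not_lt.1 hre))
    rintro rfl
    exact hv (norm_le_zero_iff.1 (by simpa using hvL))
  -- The limit is invariant under the flow, which forces `exp (s * μ) = 1` for every real `s`.
  have hperiod : ∀ s : ℝ, Complex.exp (s * μ) = 1 := by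
    intro s
    have hshift : Tendsto (fun t : ℝ => Complex.exp (s * μ) • Complex.exp (t * μ) • v) atTop
        (𝓝 L) := by
      refine (h.comp (tendsto_atTop_add_const_right _ s tendsto_id)).congr fun t => ?_
      simp [smul_smul, ← Complex.exp_add, add_mul, add_comm]
    have hfix : Complex.exp (s * μ) • L = L := tendsto_nhds_unique (h.const_smul _) hshift
    have hzero : (Complex.exp (s * μ) - 1) • L = 0 := by rw [sub_smul, one_smul, hfix, sub_self]
    exact sub_eq_zero.1 ((smul_eq_zero.1 hzero).resolve_right hL)
  have hderiv : HasDerivAt (fun s : ℝ => Complex.exp (s * μ)) μ 0 := by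
    simpa using ((hasDerivAt_id (0 : ℝ)).ofReal_comp.mul_const μ).cexp
  rw [funext hperiod] at hderiv
  exact hderiv.unique (hasDerivAt_const 0 1)

namespace Module.End

variable {K V : Type*} [Field K] [AddCommGroup V] [Module K V]

theorem maxGenEigenspace_zero_le_ker {φ : End K V} (h : ∀ x, φ (φ x) = 0 → φ x = 0) :
    φ.maxGenEigenspace 0 ≤ LinearMap.ker φ := by
  have hstable : LinearMap.ker (φ ^ 1) = LinearMap.ker (φ ^ 2) :=
    le_antisymm (fun x hx => by simp_all [sq]) (fun x hx => h x (by simpa [sq] using hx))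
  intro x hx
  obtain ⟨k, hk⟩ := (mem_maxGenEigenspace _ _ _).1 hx
  have hx' : x ∈ LinearMap.ker (φ ^ (1 + k)) := by simp_all [pow_add]
  rwa [← ker_pow_constant hstable k, pow_one] at hx'

theorem rootMultiplicity_zero_charpoly_eq_finrank_ker_iff [FiniteDimensional K V] (φ : End K V) :
    φ.charpoly.rootMultiplicity 0 = finrank K (LinearMap.ker φ) ↔
      ∀ x, φ (φ x) = 0 → φ x = 0 := by
  have hle : LinearMap.ker φ ≤ φ.maxGenEigenspace 0 :=
    φ.eigenspace_zero ▸ eigenspace_le_maxGenEigenspace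
  rw [Polynomial.rootMultiplicity_eq_natTrailingDegree',
    ← LinearMap.finrank_maxGenEigenspace_zero_eq]
  refine ⟨fun h x hx => ?_, fun h => by rw [le_antisymm (maxGenEigenspace_zero_le_ker h) hle]⟩
  have hmem : x ∈ φ.maxGenEigenspace 0 :=
    (mem_maxGenEigenspace _ _ _).2 ⟨2, by simpa [sq] using hx⟩
  rwa [← Submodule.eq_of_le_of_finrank_eq hle h.symm] at hmem

end Module.End

namespace Matrix

variable {n : Type*} [Fintype n]

theorem re_map_algebraMap_mulVec {m : Type*} (G : Matrix m n ℝ) (w : n → ℂ) :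
    (fun i => (G.map (algebraMap ℝ ℂ) *ᵥ w) i |>.re) = G *ᵥ fun j => (w j).re := by
  ext i
  simp [mulVec, dotProduct, Complex.re_sum]

theorem im_map_algebraMap_mulVec {m : Type*} (G : Matrix m n ℝ) (w : n → ℂ) :
    (fun i => (G.map (algebraMap ℝ ℂ) *ᵥ w) i |>.im) = G *ᵥ fun j => (w j).im := by
  ext i
  simp [mulVec, dotProduct, Complex.im_sum]

theorem map_algebraMap_mulVec_eq_zero_iff {m : Type*} (G : Matrix m n ℝ) (w : n → ℂ) :
    G.map (algebraMap ℝ ℂ) *ᵥ w = 0 ↔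
      G *ᵥ (fun j => (w j).re) = 0 ∧ G *ᵥ (fun j => (w j).im) = 0 := by
  rw [← re_map_algebraMap_mulVec, ← im_map_algebraMap_mulVec]
  simp only [funext_iff, Complex.ext_iff, forall_and, Pi.zero_apply, Complex.zero_re,
    Complex.zero_im]

theorem map_algebraMap_mulVec_eq_zero_of_mulVec_mulVec_eq_zero {G : Matrix n n ℝ}
    (h : ∀ x, G *ᵥ (G *ᵥ x) = 0 → G *ᵥ x = 0) (w : n → ℂ)
    (hw : G.map (algebraMap ℝ ℂ) *ᵥ (G.map (algebraMap ℝ ℂ) *ᵥ w) = 0) :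
    G.map (algebraMap ℝ ℂ) *ᵥ w = 0 := by
  simp only [map_algebraMap_mulVec_eq_zero_iff, re_map_algebraMap_mulVec,
    im_map_algebraMap_mulVec] at hw
  rw [map_algebraMap_mulVec_eq_zero_iff]
  exact ⟨h _ hw.1, h _ hw.2⟩

variable [DecidableEq n]

theorem mem_maxGenEigenspace_mulVecLin {K : Type*} [CommRing K] {A : Matrix n n K} {μ : K}
    {y : n → K} :
    y ∈ End.maxGenEigenspace A.mulVecLin μ ↔ ∃ k : ℕ, (A - μ • 1) ^ k *ᵥ y = 0 := by
  have h : A.mulVecLin - μ • 1 = toLinAlgEquiv' (A - μ • 1) := by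
    ext; simp [toLinAlgEquiv'_apply]
  simp_rw [End.mem_maxGenEigenspace, h, ← map_pow, toLinAlgEquiv'_apply]

theorem mem_roots_charpoly_map_iff_hasEigenvalue {K L : Type*} [Field K] [Field L] [Algebra K L]
    (G : Matrix n n K) (μ : L) :
    μ ∈ (G.charpoly.map (algebraMap K L)).roots ↔
      End.HasEigenvalue (G.map (algebraMap K L)).mulVecLin μ := by
  rw [End.hasEigenvalue_iff_isRoot_charpoly, charpoly_mulVecLin, charpoly_map,
    Polynomial.mem_roots (G.charpoly_monic.map _).ne_zero]

theorem exists_tendsto_of_forall_exists_tendsto_mulVec {α m R : Type*} [Semiring R]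
    [TopologicalSpace R] {l : Filter α} {f : α → Matrix m n R}
    (h : ∀ v : n → R, ∃ L, Tendsto (fun a => f a *ᵥ v) l (𝓝 L)) : ∃ P, Tendsto f l (𝓝 P) := by
  choose L hL using h
  refine ⟨of fun i j => L (Pi.single j 1) i,
    tendsto_pi_nhds.2 fun i => tendsto_pi_nhds.2 fun j => ?_⟩
  simpa [mulVec_single_one, Function.comp_def] using
    (continuous_apply i).continuousAt.tendsto.comp (hL (Pi.single j 1))

theorem exp_smul_mulVec_eq_sum {𝕂 : Type*} [RCLike 𝕂] {B : Matrix n n 𝕂} {v : n → 𝕂} {m : ℕ}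
    (h : B ^ m *ᵥ v = 0) (t : ℝ) :
    exp (t • B) *ᵥ v = ∑ k ∈ Finset.range m, (t ^ k / k.factorial : ℝ) • (B ^ k *ᵥ v) := by
  have hpow : ∀ k, m ≤ k → B ^ k *ᵥ v = 0 := fun k hk => by
    rw [← Nat.sub_add_cancel hk, pow_add, ← mulVec_mulVec, h, mulVec_zero]
  have hsum : HasSum (fun k : ℕ => (t ^ k / k.factorial : ℝ) • (B ^ k *ᵥ v))
      (exp (t • B) *ᵥ v) := by
    open scoped Matrix.Norms.Operator in
    convert (exp_series_hasSum_exp' (𝕂 := ℝ) (t • B)).map (mulVec.addMonoidHomLeft v)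
      (continuous_id.matrix_mulVec continuous_const) using 1
    · ext k : 1
      rw [Function.comp_apply, smul_pow, smul_smul, div_eq_inv_mul]
      exact (smul_mulVec _ _ _).symm
    · rfl
  refine hsum.unique (hasSum_sum_of_ne_finset_zero fun k hk => ?_)
  rw [hpow k (by simpa using hk), smul_zero]

theorem exp_algebraMap {𝕂 : Type*} [RCLike 𝕂] (c : 𝕂) :
    exp (algebraMap 𝕂 (Matrix n n 𝕂) c) = algebraMap 𝕂 (Matrix n n 𝕂) (exp c) := by
  open scoped Matrix.Norms.Operator in exact (algebraMap_exp_comm c).symm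

theorem exp_smul_eq_cexp_smul_exp_smul_sub (A : Matrix n n ℂ) (μ : ℂ) (t : ℝ) :
    exp (t • A) = Complex.exp (t * μ) • exp (t • (A - μ • 1)) := by
  have hsplit : t • A = algebraMap ℂ (Matrix n n ℂ) (t * μ) + t • (A - μ • 1) := by
    rw [Algebra.algebraMap_eq_smul_one, smul_sub, ← smul_smul, ← Complex.coe_smul,
      ← Complex.coe_smul]
    abel
  rw [hsplit, exp_add_of_commute _ _ (Algebra.commute_algebraMap_left _ _), exp_algebraMap,
    ← Complex.exp_eq_exp_ℂ, ← Algebra.smul_def]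

theorem exp_smul_mulVec_eq_sum_of_pow_sub_mulVec_eq_zero {A : Matrix n n ℂ} {μ : ℂ}
    {y : n → ℂ} {k : ℕ} (h : (A - μ • 1) ^ k *ᵥ y = 0) (t : ℝ) :
    exp (t • A) *ᵥ y = ∑ j ∈ Finset.range k,
      ((t : ℂ) ^ j * Complex.exp (t * μ) / j.factorial) • ((A - μ • 1) ^ j *ᵥ y) := by
  rw [exp_smul_eq_cexp_smul_exp_smul_sub A μ, smul_mulVec, exp_smul_mulVec_eq_sum h,
    Finset.smul_sum]
  refine Finset.sum_congr rfl fun j _ => ?_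
  rw [← Complex.coe_smul, smul_smul]
  congr 1
  push_cast
  ring

theorem map_exp_algebraMap (M : Matrix n n ℝ) :
    (exp M).map (algebraMap ℝ ℂ) = exp (M.map (algebraMap ℝ ℂ)) := by
  open scoped Matrix.Norms.Operator in
  exact map_exp (algebraMap ℝ ℂ).mapMatrix
    (continuous_id.matrix_map (algebraMapCLM ℝ ℂ).continuous) M

theorem exp_smul_map_algebraMap (G : Matrix n n ℝ) (t : ℝ) :
    exp (t • G.map (algebraMap ℝ ℂ)) = (exp (t • G)).map (algebraMap ℝ ℂ) := by
  rw [map_exp_algebraMap]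
  congr 1
  ext
  simp

theorem mulVec_eq_zero_of_tendsto_exp_smul {𝕂 : Type*} [RCLike 𝕂] {B P : Matrix n n 𝕂}
    (hP : Tendsto (fun t : ℝ => exp (t • B)) atTop (𝓝 P)) {u : n → 𝕂}
    (hu : B *ᵥ (B *ᵥ u) = 0) : B *ᵥ u = 0 := by
  have hflow : ∀ t : ℝ, exp (t • B) *ᵥ u = u + t • (B *ᵥ u) := fun t => by
    rw [exp_smul_mulVec_eq_sum (m := 2) (by rwa [sq, ← mulVec_mulVec]) t]
    simp [Finset.sum_range_succ]
  have hlin : Tendsto (fun t : ℝ => t • (B *ᵥ u)) atTop (𝓝 (P *ᵥ u - u)) := by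
    refine ((((continuous_id.matrix_mulVec continuous_const).tendsto P).comp hP).sub_const u).congr
      fun t => ?_
    simp [hflow]
  by_contra hBu
  have hnorm : Tendsto (fun t : ℝ => ‖t • (B *ᵥ u)‖) atTop atTop := by
    simpa [norm_smul] using tendsto_abs_atTop_atTop.atTop_mul_const (norm_pos_iff.2 hBu)
  exact not_tendsto_atTop_of_tendsto_nhds hlin.norm hnorm

theorem re_neg_of_tendsto_exp_smul {A P : Matrix n n ℂ}
    (hP : Tendsto (fun t : ℝ => exp (t • A)) atTop (𝓝 P)) {μ : ℂ}
    (hμ : End.HasEigenvalue A.mulVecLin μ) (hμ0 : μ ≠ 0) : μ.re < 0 := by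
  obtain ⟨v, hv⟩ := hμ.exists_hasEigenvector
  have hflow : ∀ t : ℝ, exp (t • A) *ᵥ v = Complex.exp (t * μ) • v := fun t => by
    have hv1 : (A - μ • 1) ^ 1 *ᵥ v = 0 := by
      simpa [sub_mulVec, smul_mulVec, sub_eq_zero] using hv.apply_eq_smul
    simp [exp_smul_mulVec_eq_sum_of_pow_sub_mulVec_eq_zero hv1]
  have hlim : Tendsto (fun t : ℝ => Complex.exp (t * μ) • v) atTop (𝓝 (P *ᵥ v)) :=
    (((continuous_id.matrix_mulVec continuous_const).tendsto P).comp hP).congr hflow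
  exact (eq_zero_or_re_neg_of_tendsto_cexp_smul hv.2 hlim).resolve_left hμ0

theorem exists_tendsto_exp_smul_mulVec_of_mem_maxGenEigenspace {A : Matrix n n ℂ}
    (hre : ∀ μ, End.HasEigenvalue A.mulVecLin μ → μ ≠ 0 → μ.re < 0)
    (hker : ∀ w, A *ᵥ (A *ᵥ w) = 0 → A *ᵥ w = 0) {μ : ℂ} {y : n → ℂ}
    (hy : y ∈ End.maxGenEigenspace A.mulVecLin μ) :
    ∃ L, Tendsto (fun t : ℝ => exp (t • A) *ᵥ y) atTop (𝓝 L) := by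
  rcases eq_or_ne μ 0 with rfl | hμ0
  · have hAy : A ^ 1 *ᵥ y = 0 := by
      simpa using End.maxGenEigenspace_zero_le_ker hker hy
    exact ⟨y, tendsto_const_nhds.congr fun t => by simp [exp_smul_mulVec_eq_sum hAy]⟩
  rcases eq_or_ne y 0 with rfl | hy0
  · exact ⟨0, by simp⟩
  have hμ : End.HasEigenvalue A.mulVecLin μ :=
    (End.hasUnifEigenvalue_iff_hasUnifEigenvalue_one (k := ⊤) (by simp)).1
      ((Submodule.ne_bot_iff _).2 ⟨y, hy, hy0⟩)
  obtain ⟨k, hk⟩ := mem_maxGenEigenspace_mulVecLin.1 hy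
  refine ⟨0, ?_⟩
  simp_rw [exp_smul_mulVec_eq_sum_of_pow_sub_mulVec_eq_zero hk]
  simpa using tendsto_finsetSum (Finset.range k) fun j _ =>
    ((tendsto_pow_mul_cexp_atTop_nhds_zero (hre μ hμ hμ0) j).div_const
      (j.factorial : ℂ)).smul_const ((A - μ • 1) ^ j *ᵥ y)

theorem exists_tendsto_exp_smul {A : Matrix n n ℂ}
    (hre : ∀ μ, End.HasEigenvalue A.mulVecLin μ → μ ≠ 0 → μ.re < 0)
    (hker : ∀ w, A *ᵥ (A *ᵥ w) = 0 → A *ᵥ w = 0) :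
    ∃ P, Tendsto (fun t : ℝ => exp (t • A)) atTop (𝓝 P) := by
  refine exists_tendsto_of_forall_exists_tendsto_mulVec fun w => ?_
  have hw : w ∈ ⨆ μ, End.maxGenEigenspace A.mulVecLin μ := by
    rw [End.iSup_maxGenEigenspace_eq_top]
    trivial
  refine Submodule.iSup_induction _ (motive := fun w =>
    ∃ L, Tendsto (fun t : ℝ => exp (t • A) *ᵥ w) atTop (𝓝 L)) hw
    (fun μ y hy => exists_tendsto_exp_smul_mulVec_of_mem_maxGenEigenspace hre hker hy)
    ⟨0, by simp⟩ ?_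
  rintro y z ⟨Ly, hy⟩ ⟨Lz, hz⟩
  exact ⟨Ly + Lz, (hy.add hz).congr fun t => (mulVec_add _ _ _).symm⟩

end Matrix

theorem stmt_3 {N : ℕ} (G : Matrix (Fin N) (Fin N) ℝ) :
    (∃ P : Matrix (Fin N) (Fin N) ℝ,
        Tendsto (fun t : ℝ => NormedSpace.exp (t • G)) atTop (nhds P)) ↔
      ((∀ μ ∈ (G.charpoly.map (algebraMap ℝ ℂ)).roots, μ ≠ 0 → μ.re < 0) ∧
        G.charpoly.rootMultiplicity 0 =
          Module.finrank ℝ (LinearMap.ker G.mulVecLin)) := by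
  simp_rw [mem_roots_charpoly_map_iff_hasEigenvalue]
  rw [← charpoly_mulVecLin, End.rootMultiplicity_zero_charpoly_eq_finrank_ker_iff]
  constructor
  · rintro ⟨P, hP⟩
    have hPA : Tendsto (fun t : ℝ => exp (t • G.map (algebraMap ℝ ℂ))) atTop
        (𝓝 (P.map (algebraMap ℝ ℂ))) :=
      (((continuous_id.matrix_map (algebraMapCLM ℝ ℂ).continuous).tendsto P).comp hP).congr
        fun t => (exp_smul_map_algebraMap G t).symm
    exact ⟨fun μ hμ => re_neg_of_tendsto_exp_smul hPA hμ,
      fun x => mulVec_eq_zero_of_tendsto_exp_smul hP⟩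
  · rintro ⟨hre, hker⟩
    obtain ⟨Q, hQ⟩ := exists_tendsto_exp_smul hre
      (map_algebraMap_mulVec_eq_zero_of_mulVec_mulVec_eq_zero hker)
    refine ⟨Q.map Complex.re, (((continuous_id.matrix_map Complex.continuous_re).tendsto Q).comp
      hQ).congr fun t => ?_⟩
    rw [Function.comp_apply, exp_smul_map_algebraMap, id, Matrix.map_map]
    ext
    simp
end

section
/- Let J be the 2×2 real matrix J = κ·[[cos φ, −sin φ],[sin φ, cos φ]] with κ > 0 and φ ∈ (π/2, π]. Let m ≥ 3 be an integer with π(m+2)/(2m) ≤ φ, and let v_1,…,v_m be the vertices of a regular m-gon centered at the origin in ℝ². Then for each i, the vector J v_i points into the convex hull of {v_1,…,v_m} at v_i; that is, there exist nonnegative coefficients L_{i,j} (j ≠ i) with J v_i = Σ_{j≠i} L_{i,j}(v_j − v_i). -/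
open Matrix Real

/-!
Let `δ = 2π/m`. The cyclic neighbours of `v i` sit at polar angles `α ± δ`, where `α` is the
angle of `v i`, and `J v i` is `v i` rotated by `φ` and scaled by `κ`. Expanding `J v i` along
the two edges `v_{i±1} - v_i` gives the coefficients
`κ (± sin φ / sin δ - cos φ / (1 - cos δ)) / 2`, whose signs are those of `-cos (φ ± δ/2)`.
Both are nonnegative once `π/2 + δ/2 ≤ φ ≤ π`, and `π/2 + δ/2 = π (m + 2) / (2 m)`.
-/

noncomputable def polar (r θ : ℝ) : Fin 2 → ℝ := fun s => if s = 0 then r * cos θ else r * sin θ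

lemma polar_periodic (r : ℝ) : Function.Periodic (polar r) (2 * π) := by
  intro θ
  unfold polar
  simp only [cos_add_two_pi, sin_add_two_pi]

lemma rotation_mulVec_polar (κ φ r θ : ℝ) :
    (κ • !![cos φ, -sin φ; sin φ, cos φ]) *ᵥ polar r θ = polar (κ * r) (θ + φ) := by
  ext s
  fin_cases s <;>
    simp only [polar, mulVec, dotProduct, Fin.sum_univ_two, Matrix.smul_apply, of_apply,
      cons_val', cons_val_fin_one, cons_val_zero, cons_val_one, smul_eq_mul, mul_ite, Fin.isValue,
      Fin.zero_eta, Fin.mk_one, ↓reduceIte, one_ne_zero, cos_add, sin_add] <;> ring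

noncomputable def edgeCoeff (κ φ δ : ℝ) : ℝ := κ * (sin φ / sin δ - cos φ / (1 - cos δ)) / 2

lemma polar_eq_edgeCoeff_smul_add {δ : ℝ} (hsin : sin δ ≠ 0) (κ φ r α : ℝ) :
    polar (κ * r) (α + φ) =
      edgeCoeff κ φ δ • (polar r (α + δ) - polar r α) +
        edgeCoeff κ (-φ) δ • (polar r (α - δ) - polar r α) := by
  have hcos : 1 - cos δ ≠ 0 := fun h => hsin <| by
    nlinarith [sin_sq_add_cos_sq δ, sq_nonneg (sin δ)]
  ext s
  fin_cases s <;>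
    simp only [polar, edgeCoeff, Pi.add_apply, Pi.smul_apply, Pi.sub_apply, smul_eq_mul,
      Fin.isValue, Fin.zero_eta, Fin.mk_one, ↓reduceIte, one_ne_zero, cos_add, sin_add, cos_sub,
      sin_sub, cos_neg, sin_neg] <;> field_simp <;> ring

lemma sin_mul_one_sub_cos_sub_sin_mul_cos (φ δ : ℝ) :
    sin φ * (1 - cos δ) - sin δ * cos φ = -2 * sin (δ / 2) * cos (φ + δ / 2) := by
  have hδ : δ = 2 * (δ / 2) := by ring
  conv_lhs => rw [hδ, sin_two_mul, cos_two_mul]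
  rw [cos_add]
  linear_combination (-2 * sin φ) * sin_sq_add_cos_sq (δ / 2)

lemma edgeCoeff_nonneg {κ φ δ : ℝ} (hκ : 0 ≤ κ) (hδ₀ : 0 < δ) (hδπ : δ < π)
    (hφ : cos (φ + δ / 2) ≤ 0) : 0 ≤ edgeCoeff κ φ δ := by
  have hsin : 0 < sin δ := sin_pos_of_pos_of_lt_pi hδ₀ hδπ
  have hcos : 0 < 1 - cos δ := by
    linarith [cos_lt_cos_of_nonneg_of_le_pi le_rfl hδπ.le hδ₀, cos_zero]
  have hhalf : 0 < sin (δ / 2) := sin_pos_of_pos_of_lt_pi (by linarith) (by linarith)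
  rw [edgeCoeff, div_sub_div _ _ hsin.ne' hcos.ne', sin_mul_one_sub_cos_sub_sin_mul_cos]
  have : 0 ≤ -2 * sin (δ / 2) * cos (φ + δ / 2) := by nlinarith
  positivity

lemma edgeCoeff_nonneg_of_le {κ φ δ : ℝ} (hκ : 0 ≤ κ) (hδ₀ : 0 < δ) (hδπ : δ < π)
    (hφ₁ : π / 2 + δ / 2 ≤ φ) (hφ₂ : φ ≤ π) :
    0 ≤ edgeCoeff κ φ δ ∧ 0 ≤ edgeCoeff κ (-φ) δ := by
  refine ⟨edgeCoeff_nonneg hκ hδ₀ hδπ ?_, edgeCoeff_nonneg hκ hδ₀ hδπ ?_⟩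
  · exact cos_nonpos_of_pi_div_two_le_of_le (by linarith) (by linarith)
  · rw [← cos_neg]
    exact cos_nonpos_of_pi_div_two_le_of_le (by linarith) (by linarith)

lemma two_mul_pi_div_lt_pi {m : ℕ} (hm : 2 < m) : 2 * π / m < π := by
  rw [div_lt_iff₀ (by positivity)]
  linarith [mul_lt_mul_of_pos_left (by exact_mod_cast hm : (2 : ℝ) < m) pi_pos]

lemma polar_eq_of_intModEq {m : ℕ} (r θ : ℝ) {a b : ℤ} (h : a ≡ b [ZMOD m]) (hm : m ≠ 0) :
    polar r (2 * π * a / m + θ) = polar r (2 * π * b / m + θ) := by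
  obtain ⟨t, ht⟩ := h.dvd
  have hangle : 2 * π * b / m + θ = 2 * π * a / m + θ + t * (2 * π) := by
    rw [show (b : ℝ) = a + m * t by exact_mod_cast (sub_eq_iff_eq_add'.mp ht)]
    field_simp
    ring
  rw [hangle, (polar_periodic r).int_mul t]

lemma Fin.exists_intModEq {m : ℕ} (hm : m ≠ 0) (a : ℤ) : ∃ j : Fin m, a ≡ j [ZMOD m] := by
  have hm' : (0 : ℤ) < m := by omega
  refine ⟨⟨(a % m).toNat, by have := Int.emod_lt_of_pos a hm'; omega⟩, ?_⟩
  rw [Fin.val_mk, Int.toNat_of_nonneg (Int.emod_nonneg a hm'.ne')]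
  exact (Int.mod_modEq a m).symm

lemma Fin.exists_cyclic_neighbors {m : ℕ} (hm : 2 ≤ m) (i : Fin m) :
    ∃ j k : Fin m, j ≠ i ∧ k ≠ i ∧ (i + 1 : ℤ) ≡ j [ZMOD m] ∧ (i - 1 : ℤ) ≡ k [ZMOD m] := by
  obtain ⟨j, hj⟩ : ∃ j : Fin m, (i + 1 : ℤ) ≡ j [ZMOD m] := Fin.exists_intModEq (by omega) _
  obtain ⟨k, hk⟩ : ∃ k : Fin m, (i - 1 : ℤ) ≡ k [ZMOD m] := Fin.exists_intModEq (by omega) _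
  have hm_one : ¬ (m : ℤ) ∣ 1 := fun h => by
    have := Int.eq_one_of_dvd_one (by positivity) h
    omega
  refine ⟨j, k, ?_, ?_, hj, hk⟩ <;> rintro rfl
  · exact hm_one (by simpa using hj.dvd.neg_right)
  · exact hm_one (by simpa using hk.dvd)

lemma exists_nonneg_sum_erase_eq {ι E : Type*} [Fintype ι] [DecidableEq ι] [AddCommGroup E]
    [Module ℝ E] (v : ι → E) {i j k : ι} (hji : j ≠ i) (hki : k ≠ i)
    {a b : ℝ} (ha : 0 ≤ a) (hb : 0 ≤ b) :
    ∃ L : ι → ℝ, (∀ l, 0 ≤ L l) ∧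
      a • (v j - v i) + b • (v k - v i) = ∑ l ∈ Finset.univ.erase i, L l • (v l - v i) := by
  refine ⟨fun l => (if l = j then a else 0) + (if l = k then b else 0), fun l => ?_, ?_⟩
  · dsimp only
    split_ifs <;> linarith
  · simp only [add_smul, ite_smul, zero_smul, Finset.sum_add_distrib, Finset.sum_ite_eq',
      Finset.mem_erase, Finset.mem_univ, and_true, hji, hki, ne_eq, not_false_eq_true, if_true]

theorem stmt_5_general (κ φ : ℝ) (hκ : 0 < κ) (hφ : φ ∈ Set.Ioc (π / 2) π)
    (m : ℕ) (hm : 3 ≤ m) (hmφ : π * (m + 2) / (2 * m) ≤ φ)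
    (r θ₀ : ℝ)
    (v : Fin m → (Fin 2 → ℝ))
    (hv : ∀ i : Fin m,
      v i = fun s =>
        if s = 0 then r * Real.cos (2 * π * (i + 1) / m + θ₀)
        else r * Real.sin (2 * π * (i + 1) / m + θ₀))
    (J : Matrix (Fin 2) (Fin 2) ℝ)
    (hJ : J = κ • !![Real.cos φ, -Real.sin φ; Real.sin φ, Real.cos φ]) :
    ∀ i : Fin m, ∃ L : Fin m → ℝ, (∀ j, 0 ≤ L j) ∧
      J.mulVec (v i) = ∑ j ∈ Finset.univ.erase i, L j • (v j - v i) := by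
  intro i
  have hm₀ : (0 : ℝ) < m := by exact_mod_cast (by omega : 0 < m)
  set δ := 2 * π / m with hδ
  set α := 2 * π * ((i : ℝ) + 1) / m + θ₀ with hα
  have hδ₀ : 0 < δ := by positivity
  have hδπ : δ < π := two_mul_pi_div_lt_pi hm
  have hφδ : π / 2 + δ / 2 ≤ φ := by
    convert hmφ using 1; rw [hδ]; field_simp
  obtain ⟨j, k, hji, hki, hj, hk⟩ := Fin.exists_cyclic_neighbors (by omega) i
  have vertex : ∀ (l : Fin m) (a : ℤ), (l : ℤ) + 1 ≡ a [ZMOD m] →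
      v l = polar r (2 * π * a / m + θ₀) := by
    intro l a hl
    rw [hv l, ← polar_eq_of_intModEq r θ₀ hl (by omega)]
    push_cast
    rfl
  have hvi : v i = polar r α := by rw [vertex i _ rfl, hα]; push_cast; rfl
  have hvj : v j = polar r (α + δ) := by
    rw [vertex j _ (hj.symm.add_right 1), hα, hδ]; congr 1; push_cast; ring
  have hvk : v k = polar r (α - δ) := by
    rw [vertex k _ (hk.symm.add_right 1), hα, hδ]; congr 1; push_cast; ring
  obtain ⟨hA, hB⟩ := edgeCoeff_nonneg_of_le hκ.le hδ₀ hδπ hφδ hφ.2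
  obtain ⟨L, hL, hsum⟩ := exists_nonneg_sum_erase_eq v hji hki hA hB
  refine ⟨L, hL, ?_⟩
  rw [hJ, hvi, rotation_mulVec_polar,
    polar_eq_edgeCoeff_smul_add (sin_pos_of_pos_of_lt_pi hδ₀ hδπ).ne', ← hvi, ← hvj, ← hvk, hsum]

theorem stmt_5 (κ φ : ℝ) (hκ : 0 < κ) (hφ : φ ∈ Set.Ioc (π / 2) π)
    (m : ℕ) (hm : 3 ≤ m) (hmφ : π * (m + 2) / (2 * m) ≤ φ)
    (r θ₀ : ℝ) (hr : 0 < r)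
    (v : Fin m → (Fin 2 → ℝ))
    (hv : ∀ i : Fin m,
      v i = fun s =>
        if s = 0 then r * Real.cos (2 * π * (i + 1) / m + θ₀)
        else r * Real.sin (2 * π * (i + 1) / m + θ₀))
    (J : Matrix (Fin 2) (Fin 2) ℝ)
    (hJ : J = κ • !![Real.cos φ, -Real.sin φ; Real.sin φ, Real.cos φ]) :
    ∀ i : Fin m, ∃ L : Fin m → ℝ, (∀ j, 0 ≤ L j) ∧
      J.mulVec (v i) = ∑ j ∈ Finset.univ.erase i, L j • (v j - v i) :=
  stmt_5_general κ φ hκ hφ m hm hmφ r θ₀ v hv J hJ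
end

section
/- Let λ < 0 and c ∈ {0,1}, and let u(1),…,u(s) be positive reals chosen recursively with u(1) = 1 and u(j)λ + c·u(j+1) < 0 for all j < s. For f ∈ {−1,1}^s define u_f = (f(j)u(j))_{j=1}^s ∈ ℝ^s, and let J be the s×s upper bidiagonal matrix with λ on the diagonal and c on the superdiagonal. Then for every f ∈ {−1,1}^s and every j ≤ s, the sign of the j-th coordinate of J u_f equals −f(j). -/
/-!
Write `ε = f j`. Since `ε² = 1`, the `j`-th entry of `J u_f` is `ε (λ u(j) + c ε f(j+1) u(j+1))`, and
`λ u(j) + c ε f(j+1) u(j+1) ≤ λ u(j) + c u(j+1) < 0` because `c ≥ 0`; in the last row the bracket is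
just `λ u(s) < 0`. A negative number times `ε = ±1` has sign `-ε`.
-/

open Matrix

lemma Real.sign_unit_mul_of_neg {ε t : ℝ} (hε : ε = 1 ∨ ε = -1) (ht : t < 0) :
    Real.sign (ε * t) = -ε := by
  rcases hε with rfl | rfl
  · simp [Real.sign_of_neg ht]
  · simp [Real.sign_of_pos (neg_pos.mpr ht)]

lemma mulVec_apply_of_upperBidiagonal {R : Type*} [NonUnitalNonAssocSemiring R] {s : ℕ}
    {lam c : R} {J : Matrix (Fin s) (Fin s) R}
    (hJ : ∀ i j : Fin s, J i j = if i = j then lam else if (j : ℕ) = (i : ℕ) + 1 then c else 0)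
    (v : Fin s → R) (j : Fin s) :
    (J *ᵥ v) j = lam * v j + if h : (j : ℕ) + 1 < s then c * v ⟨j + 1, h⟩ else 0 := by
  have hsplit : ∀ i, J j i * v i =
      (if j = i then lam * v i else 0) + (if (i : ℕ) = j + 1 then c * v i else 0) := by
    intro i
    rw [hJ]
    by_cases hji : j = i
    · subst hji
      simp
    · simp [hji]
  simp only [mulVec, dotProduct, hsplit, Finset.sum_add_distrib, Finset.sum_ite_eq,
    Finset.mem_univ, if_true]
  congr 1
  split_ifs with h
  · rw [Finset.sum_eq_single_of_mem ⟨j + 1, h⟩ (Finset.mem_univ _)]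
    · simp
    · intro i _ hi
      exact if_neg fun hi' => hi (Fin.ext hi')
  · exact Finset.sum_eq_zero fun i _ => if_neg fun hi : (i : ℕ) = j + 1 => h (hi ▸ i.isLt)

lemma sign_bidiagonal_row {lam c x y ε δ : ℝ} (hc : 0 ≤ c) (hy : 0 ≤ y)
    (hε : ε = 1 ∨ ε = -1) (hδ : δ = 1 ∨ δ = -1) (h : lam * x + c * y < 0) :
    Real.sign (lam * (ε * x) + c * (δ * y)) = -ε := by
  have hεε : ε * ε = 1 := by rcases hε with rfl | rfl <;> norm_num
  have hεδ : ε * δ ≤ 1 := by rcases hε with rfl | rfl <;> rcases hδ with rfl | rfl <;> norm_num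
  have hfactor : lam * (ε * x) + c * (δ * y) = ε * (lam * x + c * ((ε * δ) * y)) := by
    linear_combination (-(c * δ * y)) * hεε
  have hneg : lam * x + c * ((ε * δ) * y) < 0 := by
    have : c * ((ε * δ) * y) ≤ c * y :=
      mul_le_mul_of_nonneg_left (mul_le_of_le_one_left hy hεδ) hc
    linarith
  rw [hfactor, Real.sign_unit_mul_of_neg hε hneg]

theorem stmt_6_general {s : ℕ} (lam c : ℝ) (hlam : lam < 0) (hc : c = 0 ∨ c = 1)
    (u : Fin s → ℝ) (hu : ∀ j, 0 < u j)
    (hrec : ∀ j : Fin s, ∀ h : (j : ℕ) + 1 < s, u j * lam + c * u ⟨j + 1, h⟩ < 0)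
    (J : Matrix (Fin s) (Fin s) ℝ)
    (hJ : ∀ i j : Fin s, J i j =
      if i = j then lam else if (j : ℕ) = (i : ℕ) + 1 then c else 0)
    (f : Fin s → ℝ) (hf : ∀ j, f j = 1 ∨ f j = -1) :
    ∀ j : Fin s, Real.sign ((J.mulVec fun i => f i * u i) j) = -f j := by
  intro j
  have hc0 : 0 ≤ c := by rcases hc with rfl | rfl <;> norm_num
  rw [mulVec_apply_of_upperBidiagonal hJ]
  split_ifs with h
  · refine sign_bidiagonal_row hc0 (hu _).le (hf j) (hf _) ?_
    linarith [hrec j h]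
  · rw [add_zero, mul_left_comm]
    exact Real.sign_unit_mul_of_neg (hf j) (mul_neg_of_neg_of_pos hlam (hu j))

theorem stmt_6 {s : ℕ} (lam c : ℝ) (hlam : lam < 0) (hc : c = 0 ∨ c = 1)
    (u : Fin s → ℝ) (hu : ∀ j, 0 < u j)
    (hu1 : ∀ h : 0 < s, u ⟨0, h⟩ = 1)
    (hrec : ∀ j : Fin s, ∀ h : (j : ℕ) + 1 < s, u j * lam + c * u ⟨j + 1, h⟩ < 0)
    (J : Matrix (Fin s) (Fin s) ℝ)
    (hJ : ∀ i j : Fin s, J i j =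
      if i = j then lam else if (j : ℕ) = (i : ℕ) + 1 then c else 0)
    (f : Fin s → ℝ) (hf : ∀ j, f j = 1 ∨ f j = -1) :
    ∀ j : Fin s, Real.sign ((J.mulVec fun i => f i * u i) j) = -f j :=
  stmt_6_general lam c hlam hc u hu hrec J hJ f hf
end

section
/- Let Θ = 0, A = α = 1, and √2 ≤ a < 2, and set σ²(x) = 1 + a x + x². Then there do NOT exist real numbers x₁ < x₂ < x₃ such that all of the following hold: σ²(x₂) + x₂(x₃−x₂) ≥ 0 with strict positivity structure as below, and specifically the off-diagonal entries Ξ₁₂, Ξ₁₃, Ξ₂₁, Ξ₂₃, Ξ₃₁, Ξ₃₂ are all nonnegative, where Ξ₁₂ = −σ²(x₁) − x₁(x₃−x₁), Ξ₁₃ = σ²(x₁) − x₁(x₁−x₂), Ξ₂₁ = σ²(x₂) + x₂(x₃−x₂), Ξ₂₃ = σ²(x₂) − x₂(x₂−x₁), Ξ₃₁ = σ²(x₃) − x₃(x₃−x₂), Ξ₃₂ = −σ²(x₃) + x₃(x₃−x₁). -/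
/-!
Writing σ²(x) = 1 + a x + x², every entry is ±(1 + xᵢ (a + xⱼ)). The entries Ξ₃₁ and Ξ₃₂ give
x₃ (x₂ − x₁) ≥ 0 and x₃ (a + x₁) ≤ −1, hence x₃ > 0 and −x₁ > a. With X = −x₁ and Y = a + x₃,
eliminating x₂ between Ξ₁₃ ≥ 0 and Ξ₂₁ ≥ 0 gives a X Y ≤ X + Y. This is impossible for X, Y > a
once a² ≥ 2, because a (a X Y − X − Y) = (a X − 1)(a Y − 1) − 1 and both factors exceed 1.
-/

theorem add_lt_mul_mul_of_lt {a X Y : ℝ} (ha : 2 ≤ a ^ 2) (ha₀ : 0 < a) (hX : a < X) (hY : a < Y) :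
    X + Y < a * X * Y := by
  have hX₁ : 1 < a * X - 1 := by nlinarith
  have hY₁ : 1 < a * Y - 1 := by nlinarith
  have hprod : 1 < (a * X - 1) * (a * Y - 1) := by nlinarith
  have : 0 < a * (a * X * Y - X - Y) := by linear_combination hprod
  linarith [pos_of_mul_pos_right this ha₀.le]

theorem mul_mul_le_add_of_mul_le_one {a X Y z : ℝ} (hX : 0 ≤ X) (hY : 0 ≤ Y)
    (hXz : X * (a + z) ≤ 1) (hzY : -1 ≤ z * Y) : a * X * Y ≤ X + Y := by
  nlinarith [mul_le_mul_of_nonneg_right hXz hY, mul_le_mul_of_nonneg_left hzY hX]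

theorem stmt_11_general (a : ℝ) (ha1 : Real.sqrt 2 ≤ a) :
    ¬ ∃ x₁ x₂ x₃ : ℝ, x₁ < x₂ ∧ x₂ < x₃ ∧
      (0 ≤ -(1 + a * x₁ + x₁ ^ 2) - x₁ * (x₃ - x₁)) ∧
      (0 ≤ (1 + a * x₁ + x₁ ^ 2) - x₁ * (x₁ - x₂)) ∧
      (0 ≤ (1 + a * x₂ + x₂ ^ 2) + x₂ * (x₃ - x₂)) ∧
      (0 ≤ (1 + a * x₂ + x₂ ^ 2) - x₂ * (x₂ - x₁)) ∧
      (0 ≤ (1 + a * x₃ + x₃ ^ 2) - x₃ * (x₃ - x₂)) ∧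
      (0 ≤ -(1 + a * x₃ + x₃ ^ 2) + x₃ * (x₃ - x₁)) := by
  rintro ⟨x₁, x₂, x₃, h₁₂, -, -, Ξ₁₃, Ξ₂₁, -, Ξ₃₁, Ξ₃₂⟩
  have ha₀ : 0 < a := (Real.sqrt_pos.2 two_pos).trans_le ha1
  have ha : 2 ≤ a ^ 2 := (Real.sqrt_le_iff.1 ha1).2
  have hx₃ : 0 < x₃ :=
    (nonneg_of_mul_nonneg_left (by linarith) (sub_pos.2 h₁₂)).lt_of_ne (by rintro rfl; linarith)
  have hx₁ : a < -x₁ := by nlinarith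
  have key : a * -x₁ * (a + x₃) ≤ -x₁ + (a + x₃) :=
    mul_mul_le_add_of_mul_le_one (z := x₂) (by linarith) (by linarith) (by linarith) (by linarith)
  exact (add_lt_mul_mul_of_lt ha ha₀ hx₁ (by linarith)).not_ge key

theorem stmt_11 (a : ℝ) (ha1 : Real.sqrt 2 ≤ a) (ha2 : a < 2) :
    ¬ ∃ x₁ x₂ x₃ : ℝ, x₁ < x₂ ∧ x₂ < x₃ ∧
      (0 ≤ -(1 + a * x₁ + x₁ ^ 2) - x₁ * (x₃ - x₁)) ∧
      (0 ≤ (1 + a * x₁ + x₁ ^ 2) - x₁ * (x₁ - x₂)) ∧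
      (0 ≤ (1 + a * x₂ + x₂ ^ 2) + x₂ * (x₃ - x₂)) ∧
      (0 ≤ (1 + a * x₂ + x₂ ^ 2) - x₂ * (x₂ - x₁)) ∧
      (0 ≤ (1 + a * x₃ + x₃ ^ 2) - x₃ * (x₃ - x₂)) ∧
      (0 ≤ -(1 + a * x₃ + x₃ ^ 2) + x₃ * (x₃ - x₁)) :=
  stmt_11_general a ha1
end

section
/- Let W(t) = A exp(tL) S̃ ∈ ℝ^{M×M} where A ∈ ℝ^{M×R}, S̃ ∈ ℝ^{R×M}, L ∈ ℝ^{R×R}, and H ∈ ℝ^{M×N} satisfy A S̃ H = H, S̃ H G = L S̃ H for some G ∈ ℝ^{N×N}. Then W(t) H = H exp(tG) for all t ≥ 0; if moreover Hv = 1_M and Gv = 0 for some v ∈ ℝ^N, then each row of W(t) sums to 1. -/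
/-! The relation `S' H G = L S' H` passes to all powers, hence termwise to the exponential
series: `S' H exp(tG) = exp(tL) S' H`. Multiplying on the left by `A` and using `A S' H = H`
gives `W(t) H = H exp(tG)`. If `G v = 0` then `exp(tG) v = v`, so
`W(t) 1 = W(t) H v = H exp(tG) v = H v = 1`. -/

open Matrix

open NormedSpace

namespace Matrix

variable {𝕂 : Type*} [RCLike 𝕂] {m n : Type*} [Fintype m] [DecidableEq m] [Fintype n]
  [DecidableEq n]

theorem mul_pow_eq_pow_mul_of_mul_eq {B : Matrix m n 𝕂} {G : Matrix n n 𝕂} {L : Matrix m m 𝕂}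
    (h : B * G = L * B) (k : ℕ) : B * G ^ k = L ^ k * B := by
  induction k with
  | zero => simp
  | succ k ih => rw [pow_succ, ← Matrix.mul_assoc, ih, Matrix.mul_assoc, h, ← Matrix.mul_assoc,
      ← pow_succ]

attribute [local instance] Matrix.linftyOpNormedRing Matrix.linftyOpNormedAlgebra in
theorem mul_exp_eq_exp_mul_of_mul_eq {B : Matrix m n 𝕂} {G : Matrix n n 𝕂} {L : Matrix m m 𝕂}
    (h : B * G = L * B) : B * exp G = exp L * B := by
  have hG : HasSum (fun k => B * ((k.factorial⁻¹ : 𝕂) • G ^ k)) (B * exp G) :=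
    (exp_series_hasSum_exp' G).map (mulLeftLinearMap n 𝕂 B)
      (continuous_const.matrix_mul continuous_id)
  have hL : HasSum (fun k => ((k.factorial⁻¹ : 𝕂) • L ^ k) * B) (exp L * B) :=
    (exp_series_hasSum_exp' L).map (mulRightLinearMap m 𝕂 B)
      (continuous_id.matrix_mul continuous_const)
  simp only [Matrix.mul_smul, Matrix.smul_mul, mul_pow_eq_pow_mul_of_mul_eq h] at hG hL
  exact hG.unique hL

theorem exp_mulVec_eq_self_of_mulVec_eq_zero {G : Matrix n n 𝕂} {v : n → 𝕂} (hv : G *ᵥ v = 0) :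
    exp G *ᵥ v = v := by
  -- As an `n × 1` matrix, `v` intertwines the `1 × 1` zero matrix with `G`.
  have h : replicateCol Unit v * (0 : Matrix Unit Unit 𝕂) = G * replicateCol Unit v := by
    rw [Matrix.mul_zero, ← replicateCol_mulVec, hv, replicateCol_zero]
  have := mul_exp_eq_exp_mul_of_mul_eq h
  rw [exp_zero, Matrix.mul_one, ← replicateCol_mulVec] at this
  exact (replicateCol_injective this).symm

end Matrix

theorem stmt_19 {M R N : ℕ}
    (A : Matrix (Fin M) (Fin R) ℝ) (S' : Matrix (Fin R) (Fin M) ℝ)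
    (L : Matrix (Fin R) (Fin R) ℝ) (H : Matrix (Fin M) (Fin N) ℝ)
    (G : Matrix (Fin N) (Fin N) ℝ)
    (hASH : A * S' * H = H) (hint : S' * H * G = L * (S' * H)) :
    (∀ t : ℝ, 0 ≤ t →
      (A * NormedSpace.exp (t • L) * S') * H = H * NormedSpace.exp (t • G)) ∧
    (∀ v : Fin N → ℝ, H.mulVec v = (fun _ => (1 : ℝ)) → G.mulVec v = 0 →
      ∀ t : ℝ, 0 ≤ t →
        (A * NormedSpace.exp (t • L) * S').mulVec (fun _ => (1 : ℝ)) =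
          fun _ => (1 : ℝ)) := by
  have hW (t : ℝ) : A * exp (t • L) * S' * H = H * exp (t • G) := by
    have hintt : S' * H * (t • G) = (t • L) * (S' * H) := by
      rw [Matrix.mul_smul, hint, Matrix.smul_mul]
    simp only [Matrix.mul_assoc]
    rw [← mul_exp_eq_exp_mul_of_mul_eq hintt, ← Matrix.mul_assoc, ← Matrix.mul_assoc, hASH]
  refine ⟨fun t _ => hW t, fun v hHv hGv t _ => ?_⟩
  have hexp : exp (t • G) *ᵥ v = v :=
    exp_mulVec_eq_self_of_mulVec_eq_zero (by rw [smul_mulVec, hGv, smul_zero])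
  rw [← hHv, mulVec_mulVec, hW, ← mulVec_mulVec, hexp]
end
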